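/- arXiv:1409.3946 — 3 statements merged into one kernel-verified Lean document; each statement's English description precedes it below -/
import Mathlib

section
/- Let X be a nonempty compact convex subset of ℝⁿ and M a nonempty closed convex subset of ℝⁿ. Then X ∩ M ≠ ∅ if and only if σ_X(ψ) + σ_M(−ψ) ≥ 0 for every ψ ∈ ℝⁿ with ‖ψ‖ = 1. -/
open scoped RealInnerProductSpace

/-- Support function of a set `M ⊆ ℝⁿ`, with values in the extended reals:
`σ_M(ψ) = sup_{m ∈ M} ψ·m`. -/
noncomputable def suppFn {n : ℕ} (M : Set (EuclideanSpace ℝ (Fin n)))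
    (ψ : EuclideanSpace ℝ (Fin n)) : EReal :=
  ⨆ m ∈ M, ((⟪ψ, m⟫ : ℝ) : EReal)

lemma suppFn_le {n : ℕ} {M : Set (EuclideanSpace ℝ (Fin n))}
    {ψ : EuclideanSpace ℝ (Fin n)} {c : ℝ}
    (h : ∀ m ∈ M, (⟪ψ, m⟫ : ℝ) ≤ c) : suppFn M ψ ≤ (c : EReal) := by
  refine iSup₂_le fun m hm => ?_
  exact_mod_cast h m hm

lemma le_suppFn {n : ℕ} {M : Set (EuclideanSpace ℝ (Fin n))}
    {ψ m : EuclideanSpace ℝ (Fin n)} (hm : m ∈ M) :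
    ((⟪ψ, m⟫ : ℝ) : EReal) ≤ suppFn M ψ :=
  le_iSup₂ (f := fun m (_ : m ∈ M) => ((⟪ψ, m⟫ : ℝ) : EReal)) m hm

/-- Let `X` be a nonempty compact convex subset of `ℝⁿ` and `M` a nonempty closed convex
subset of `ℝⁿ`.  Then `X ∩ M ≠ ∅` iff `σ_X(ψ) + σ_M(−ψ) ≥ 0` for every unit vector `ψ`. -/
theorem stmt1 (n : ℕ) (X M : Set (EuclideanSpace ℝ (Fin n)))
    (hXne : X.Nonempty) (hXcp : IsCompact X) (hXcv : Convex ℝ X)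
    (hMne : M.Nonempty) (hMcl : IsClosed M) (hMcv : Convex ℝ M) :
    (X ∩ M).Nonempty ↔
      ∀ ψ : EuclideanSpace ℝ (Fin n), ‖ψ‖ = 1 →
        (0 : EReal) ≤ suppFn X ψ + suppFn M (-ψ) := by
  constructor
  · rintro ⟨x, hxX, hxM⟩ ψ hψ
    have h1 : ((⟪ψ, x⟫ : ℝ) : EReal) ≤ suppFn X ψ := le_suppFn hxX
    have h2 : ((⟪-ψ, x⟫ : ℝ) : EReal) ≤ suppFn M (-ψ) := le_suppFn hxM
    have h0 : (⟪ψ, x⟫ : ℝ) + (⟪-ψ, x⟫ : ℝ) = 0 := by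
      rw [inner_neg_left]; ring
    calc (0 : EReal) = ((⟪ψ, x⟫ : ℝ) : EReal) + ((⟪-ψ, x⟫ : ℝ) : EReal) := by
          rw [← EReal.coe_add, h0, EReal.coe_zero]
      _ ≤ suppFn X ψ + suppFn M (-ψ) := add_le_add h1 h2
  · intro h
    by_contra hne
    have hdisj : Disjoint X M := Set.disjoint_iff_inter_eq_empty.mpr
      (Set.not_nonempty_iff_eq_empty.mp hne)
    obtain ⟨f, u, v, hfX, huv, hfM⟩ :=
      geometric_hahn_banach_compact_closed hXcv hXcp hMcv hMcl hdisj
    set y := (InnerProductSpace.toDual ℝ (EuclideanSpace ℝ (Fin n))).symm f with hy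
    have hfy : ∀ z, f z = ⟪y, z⟫ := fun z => by
      rw [hy]
      exact (InnerProductSpace.toDual_symm_apply).symm
    have hy0 : y ≠ 0 := by
      intro h0
      obtain ⟨x, hx⟩ := hXne
      obtain ⟨m, hm⟩ := hMne
      have h1 := hfX x hx
      have h2 := hfM m hm
      rw [hfy, h0, inner_zero_left] at h1 h2
      linarith
    have hnorm : (0 : ℝ) < ‖y‖ := norm_pos_iff.mpr hy0
    set ψ := ‖y‖⁻¹ • y with hψdef
    have hψ : ‖ψ‖ = 1 := norm_smul_inv_norm hy0
    have hA : suppFn X ψ ≤ ((‖y‖⁻¹ * u : ℝ) : EReal) := by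
      refine suppFn_le fun x hx => ?_
      rw [hψdef, real_inner_smul_left]
      have := hfX x hx
      rw [hfy] at this
      have := mul_le_mul_of_nonneg_left this.le (inv_nonneg.mpr hnorm.le)
      linarith
    have hB : suppFn M (-ψ) ≤ ((‖y‖⁻¹ * (-v) : ℝ) : EReal) := by
      refine suppFn_le fun m hm => ?_
      rw [hψdef, ← smul_neg, real_inner_smul_left, inner_neg_left]
      have := hfM m hm
      rw [hfy] at this
      have := mul_le_mul_of_nonneg_left this.le (inv_nonneg.mpr hnorm.le)
      nlinarith [mul_pos (inv_pos.mpr hnorm) (sub_pos.mpr huv)]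
    have hsum : suppFn X ψ + suppFn M (-ψ) ≤ ((‖y‖⁻¹ * u + ‖y‖⁻¹ * (-v) : ℝ) : EReal) := by
      rw [EReal.coe_add]
      exact add_le_add hA hB
    have h0 := le_trans (h ψ hψ) hsum
    rw [show (0 : EReal) = ((0 : ℝ) : EReal) from rfl, EReal.coe_le_coe_iff] at h0
    nlinarith [mul_pos (inv_pos.mpr hnorm) (sub_pos.mpr huv)]
end

section
/- Let U ⊆ ℝᵐ be a nonempty compact set, t > 0, and f : [0,t] × U → ℝ a continuous function. Then sup { ∫_0^t f(τ, u(τ)) dτ : u : [0,t] → U measurable } = ∫_0^t max_{v ∈ U} f(τ, v) dτ, and the supremum is attained by some measurable u : [0,t] → U. -/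
/-!
Pointwise `f τ (u τ) ≤ max_{v ∈ U} f τ v`, so the only issue is attainment: a measurable
maximiser is needed. The maximiser set `{(τ, v) | ∀ w, f τ w ≤ f τ v}` is closed, so since `U` is
compact the set of `τ` whose fibre meets a given closed ball is a projection of a closed set,
hence closed. The Kuratowski–Ryll-Nardzewski construction then selects a maximiser measurably,
as the limit of measurable approximations taking values in a dense sequence.
-/

open MeasureTheory Filter Metric Set Topology

section MeasurableSelection

variable {α X : Type*} [MeasurableSpace α] [MetricSpace X]

lemma exists_measurable_nat_forall {p : α → ℕ → Prop} (hp : ∀ k, MeasurableSet {a | p a k})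
    (h : ∀ a, ∃ k, p a k) : ∃ k : α → ℕ, Measurable k ∧ ∀ a, p a (k a) := by
  classical
  exact ⟨fun a => Nat.find (h a), measurable_find h hp, fun a => Nat.find_spec (h a)⟩

lemma exists_measurable_nat_refine {A : α → Set X}
    (hA : ∀ x r, MeasurableSet {a | (A a ∩ closedBall x r).Nonempty})
    {w : ℕ → X} (hw : DenseRange w) {k : α → ℕ} (hk : Measurable k) {r s : ℝ} (hs : 0 < s)
    (hkA : ∀ a, (A a ∩ closedBall (w (k a)) r).Nonempty) :
    ∃ k' : α → ℕ, Measurable k' ∧ ∀ a, (A a ∩ closedBall (w (k' a)) s).Nonempty ∧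
      dist (w (k' a)) (w (k a)) ≤ r + s := by
  refine exists_measurable_nat_forall
    (p := fun a j => (A a ∩ closedBall (w j) s).Nonempty ∧ dist (w j) (w (k a)) ≤ r + s)
    (fun j => (hA (w j) s).inter (hk (.of_discrete (s := {i | dist (w j) (w i) ≤ r + s}))))
    fun a => ?_
  obtain ⟨x, hxA, hxk⟩ := hkA a
  obtain ⟨j, hj⟩ := hw.exists_dist_lt x hs
  refine ⟨j, ⟨x, hxA, hj.le⟩, ?_⟩
  calc dist (w j) (w (k a)) ≤ dist (w j) x + dist x (w (k a)) := dist_triangle _ _ _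
    _ ≤ s + r := add_le_add (by rw [dist_comm]; exact hj.le) hxk
    _ = r + s := add_comm s r

lemma exists_measurable_nat_seq {A : α → Set X} (hne : ∀ a, (A a).Nonempty)
    (hA : ∀ x r, MeasurableSet {a | (A a ∩ closedBall x r).Nonempty})
    {w : ℕ → X} (hw : DenseRange w) :
    ∃ k : ℕ → α → ℕ, ∀ n, Measurable (k n) ∧
      (∀ a, (A a ∩ closedBall (w (k n a)) ((1 / 2) ^ n)).Nonempty) ∧
      ∀ a, dist (w (k (n + 1) a)) (w (k n a)) ≤ (1 / 2) ^ n + (1 / 2) ^ (n + 1) := by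
  obtain ⟨k₀, hk₀, hk₀A⟩ := exists_measurable_nat_forall (fun j => hA (w j) 1) fun a => by
    obtain ⟨x, hx⟩ := hne a
    obtain ⟨j, hj⟩ := hw.exists_dist_lt x one_pos
    exact ⟨j, x, hx, hj.le⟩
  have step (n : ℕ) (k : α → ℕ)
      (hk : Measurable k ∧ ∀ a, (A a ∩ closedBall (w (k a)) ((1 / 2) ^ n)).Nonempty) :
      ∃ k' : α → ℕ, (Measurable k' ∧
        ∀ a, (A a ∩ closedBall (w (k' a)) ((1 / 2) ^ (n + 1))).Nonempty) ∧
        ∀ a, dist (w (k' a)) (w (k a)) ≤ (1 / 2) ^ n + (1 / 2) ^ (n + 1) := by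
    obtain ⟨k', hk', hk'A⟩ :=
      exists_measurable_nat_refine hA hw hk.1 (s := (1 / 2) ^ (n + 1)) (by positivity) hk.2
    exact ⟨k', ⟨hk', fun a => (hk'A a).1⟩, fun a => (hk'A a).2⟩
  choose! next hnext using step
  let k : ℕ → α → ℕ := fun n => Nat.rec k₀ next n
  have hk (n : ℕ) : Measurable (k n) ∧
      ∀ a, (A a ∩ closedBall (w (k n a)) ((1 / 2) ^ n)).Nonempty := by
    induction n with
    | zero => exact ⟨hk₀, fun a => by rw [pow_zero]; exact hk₀A a⟩
    | succ n ih => exact (hnext n (k n) ih).1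
  exact ⟨k, fun n => ⟨(hk n).1, (hk n).2, (hnext n (k n) (hk n)).2⟩⟩

lemma IsClosed.mem_of_tendsto_of_infDist_le {s : Set X} (hs : IsClosed s) (hne : s.Nonempty)
    {x : ℕ → X} {y : X} (hx : Tendsto x atTop (𝓝 y)) {ε : ℕ → ℝ} (hε : Tendsto ε atTop (𝓝 0))
    (hxs : ∀ n, infDist (x n) s ≤ ε n) : y ∈ s :=
  (hs.mem_iff_infDist_zero hne).2 <| le_antisymm
    (le_of_tendsto_of_tendsto' (((continuous_infDist_pt s).tendsto y).comp hx) hε hxs)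
    infDist_nonneg

/-- Kuratowski–Ryll-Nardzewski measurable selection theorem. -/
theorem exists_measurable_forall_mem [CompleteSpace X] [TopologicalSpace.SeparableSpace X]
    [Nonempty X] [MeasurableSpace X] [BorelSpace X] {A : α → Set X}
    (hne : ∀ a, (A a).Nonempty) (hcl : ∀ a, IsClosed (A a))
    (hA : ∀ x r, MeasurableSet {a | (A a ∩ closedBall x r).Nonempty}) :
    ∃ u : α → X, Measurable u ∧ ∀ a, u a ∈ A a := by
  set w := TopologicalSpace.denseSeq X
  obtain ⟨k, hk⟩ := exists_measurable_nat_seq hne hA (TopologicalSpace.denseRange_denseSeq X)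
  have hcauchy (a : α) : CauchySeq fun n => w (k n a) := by
    refine cauchySeq_of_le_geometric (1 / 2) 2 (by norm_num) fun n => ?_
    rw [dist_comm]
    have hstep := (hk n).2.2 a
    have hpow : ((1 : ℝ) / 2) ^ (n + 1) ≤ (1 / 2) ^ n :=
      pow_le_pow_of_le_one (by norm_num) (by norm_num) n.le_succ
    linarith
  choose u hu using fun a => cauchySeq_tendsto_of_complete (hcauchy a)
  refine ⟨u, measurable_of_tendsto_metrizable (fun n => measurable_from_nat.comp (hk n).1)
    (tendsto_pi_nhds.2 hu), fun a => ?_⟩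
  refine (hcl a).mem_of_tendsto_of_infDist_le (hne a) (hu a) (ε := fun n => (1 / 2 : ℝ) ^ n)
    (tendsto_pow_atTop_nhds_zero_of_lt_one (by norm_num) (by norm_num)) fun n => ?_
  obtain ⟨x, hxA, hxk⟩ := (hk n).2.1 a
  exact (infDist_le_dist_of_mem hxA).trans (by rw [dist_comm]; exact hxk)

theorem exists_measurable_forall_mem_of_isClosed [TopologicalSpace α] [OpensMeasurableSpace α]
    [CompactSpace X] [Nonempty X] [MeasurableSpace X] [BorelSpace X] {C : Set (α × X)}
    (hC : IsClosed C) (hne : ∀ a, ∃ x, (a, x) ∈ C) :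
    ∃ u : α → X, Measurable u ∧ ∀ a, (a, u a) ∈ C := by
  refine exists_measurable_forall_mem (A := fun a => Prod.mk a ⁻¹' C) hne
    (fun a => hC.preimage (Continuous.prodMk_right a)) fun x r => ?_
  have hproj : {a | (Prod.mk a ⁻¹' C ∩ closedBall x r).Nonempty}
      = Prod.fst '' (C ∩ univ ×ˢ closedBall x r) := by
    ext a
    simp [Set.Nonempty, and_comm]
  rw [hproj]
  exact (isClosedMap_fst_of_compactSpace _ (hC.inter (isClosed_univ.prod isClosed_closedBall)))
    |>.measurableSet

theorem exists_measurable_forall_apply_le [TopologicalSpace α] [OpensMeasurableSpace α]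
    [CompactSpace X] [Nonempty X] [MeasurableSpace X] [BorelSpace X] {g : α × X → ℝ}
    (hg : Continuous g) : ∃ u : α → X, Measurable u ∧ ∀ a x, g (a, x) ≤ g (a, u a) := by
  have hC : IsClosed {p : α × X | ∀ x, g (p.1, x) ≤ g p} := by
    simp only [Set.ofPred_forall]
    exact isClosed_iInter fun x => isClosed_le (by fun_prop) hg
  refine exists_measurable_forall_mem_of_isClosed hC fun a => ?_
  obtain ⟨x, -, hx⟩ := isCompact_univ.exists_isMaxOn univ_nonempty
    (hg.comp (Continuous.prodMk_right a)).continuousOn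
  exact ⟨x, fun y => hx (mem_univ y)⟩

end MeasurableSelection

theorem ContinuousOn.integrable_comp_of_isCompact {γ Y E : Type*} [MeasurableSpace γ]
    {μ : Measure γ} [IsFiniteMeasure μ] [TopologicalSpace Y] [T2Space Y] [MeasurableSpace Y]
    [OpensMeasurableSpace Y] [NormedAddCommGroup E] {F : Y → E} {S : Set Y}
    (hF : ContinuousOn F S) (hS : IsCompact S) {h : γ → Y} (hh : AEMeasurable h μ)
    (hhS : ∀ᵐ x ∂μ, h x ∈ S) : Integrable (fun x => F (h x)) μ := by
  have hmapS : μ.map h = (μ.map h).restrict S :=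
    (Measure.restrict_eq_self_of_ae_mem ((ae_map_iff hh hS.isClosed.measurableSet).2 hhS)).symm
  have hFm : AEStronglyMeasurable F (μ.map h) := by
    rw [hmapS]
    exact hF.aestronglyMeasurable_of_isCompact hS hS.isClosed.measurableSet
  obtain ⟨C, hC⟩ := hS.exists_bound_of_continuousOn hF
  exact .of_bound (hFm.comp_aemeasurable hh) C (hhS.mono fun x hx => hC _ hx)

/-- Let `U ⊆ ℝᵐ` be nonempty and compact, `t > 0`, and `f : [0,t] × U → ℝ` continuous.  Then
`sup { ∫_0^t f(τ, u(τ)) dτ : u : [0,t] → U measurable } = ∫_0^t max_{v ∈ U} f(τ, v) dτ`,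
and the supremum is attained by some measurable `u : [0,t] → U`. -/
theorem stmt9 (m : ℕ) (U : Set (Fin m → ℝ)) (hUne : U.Nonempty) (hUcp : IsCompact U)
    (t : ℝ) (ht : 0 < t) (f : ℝ → (Fin m → ℝ) → ℝ)
    (hf : ContinuousOn (fun p : ℝ × (Fin m → ℝ) => f p.1 p.2) (Set.Icc 0 t ×ˢ U)) :
    IsGreatest
      {I : ℝ | ∃ u : ℝ → Fin m → ℝ, Measurable u ∧ (∀ τ ∈ Set.Icc (0 : ℝ) t, u τ ∈ U) ∧
        I = ∫ τ in (0 : ℝ)..t, f τ (u τ)}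
      (∫ τ in (0 : ℝ)..t, ⨆ v : U, f τ (v : Fin m → ℝ)) := by
  have := hUne.to_subtype
  have := isCompact_iff_compactSpace.mp hUcp
  obtain ⟨u, hu, hmax⟩ := exists_measurable_forall_apply_le (g := fun p : Icc 0 t × U => f p.1 p.2)
    (hf.comp_continuous (f := fun p : Icc 0 t × U => ((p.1 : ℝ), (p.2 : Fin m → ℝ)))
      (by fun_prop) fun p => ⟨p.1.2, p.2.2⟩)
  set u₀ : ℝ → Fin m → ℝ := fun τ => u (projIcc 0 t ht.le τ)
  have hu₀ : Measurable u₀ := measurable_subtype_coe.comp (hu.comp continuous_projIcc.measurable)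
  have hu₀U (τ : ℝ) (_ : τ ∈ Icc 0 t) : u₀ τ ∈ U := (u _).2
  have hu₀max (τ : ℝ) (hτ : τ ∈ Icc 0 t) (v : U) : f τ v ≤ f τ (u₀ τ) := by
    simpa [u₀, projIcc_of_mem _ hτ] using hmax ⟨τ, hτ⟩ v
  have hsup (τ : ℝ) (hτ : τ ∈ Icc 0 t) : (⨆ v : U, f τ v) = f τ (u₀ τ) :=
    le_antisymm (ciSup_le (hu₀max τ hτ))
      (le_ciSup ⟨_, forall_mem_range.2 (hu₀max τ hτ)⟩ ⟨u₀ τ, hu₀U τ hτ⟩)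
  have hint (w : ℝ → Fin m → ℝ) (hw : Measurable w) (hwU : ∀ τ ∈ Icc 0 t, w τ ∈ U) :
      IntervalIntegrable (fun τ => f τ (w τ)) volume 0 t :=
    (intervalIntegrable_iff_integrableOn_Icc_of_le ht.le).2 <|
      hf.integrable_comp_of_isCompact (isCompact_Icc.prod hUcp)
        (measurable_id.prodMk hw).aemeasurable
        ((ae_restrict_mem measurableSet_Icc).mono fun τ hτ => ⟨hτ, hwU τ hτ⟩)
  have hattain : (∫ τ in (0 : ℝ)..t, ⨆ v : U, f τ v) = ∫ τ in (0 : ℝ)..t, f τ (u₀ τ) :=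
    intervalIntegral.integral_congr fun τ hτ => hsup τ (by rwa [uIcc_of_le ht.le] at hτ)
  refine ⟨⟨u₀, hu₀, hu₀U, hattain⟩, ?_⟩
  rintro _ ⟨w, hw, hwU, rfl⟩
  rw [hattain]
  exact intervalIntegral.integral_mono_on ht.le (hint w hw hwU) (hint u₀ hu₀ hu₀U)
    fun τ hτ => hu₀max τ hτ ⟨w τ, hwU τ hτ⟩
end

section
/- Let 0 < α < 1 and z⁰ ∈ ℝⁿ with z⁰ ≠ 0. Then for every t with 0 < t < α‖z⁰‖ and every measurable control u : [0,t] → ℝⁿ with ‖u(τ)‖ ≤ 1 for almost every τ, the trajectory endpoint is nonzero: (t^{α−1}/Γ(α)) z⁰ + ∫_0^t ((t−τ)^{α−1}/Γ(α)) u(τ) dτ ≠ 0. Hence T = α‖z⁰‖ is the minimal time at which the system D^α z = u, ‖u‖ ≤ 1, J^{1−α}z|_{t=0} = z⁰ can reach the origin. -/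
open MeasureTheory intervalIntegral

lemma rpow_int : ∀ (α t : ℝ), 0 < α → 0 < t →
    ∫ τ in (0:ℝ)..t, (t - τ) ^ (α - 1) = t ^ α / α := fun α t hα0 _ => by
  rw [integral_comp_sub_left (fun x => x ^ (α - 1)) t, sub_self, sub_zero,
    integral_rpow (Or.inl (by linarith))]
  rw [sub_add_cancel, Real.zero_rpow hα0.ne', sub_zero]

lemma rpow_ii (α t : ℝ) (hα0 : 0 < α) :
    IntervalIntegrable (fun τ => (t - τ) ^ (α - 1)) volume 0 t := by
  have h := (intervalIntegrable_rpow' (a := 0) (b := t) (r := α - 1)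
    (by linarith)).comp_sub_left t
  simpa using h.symm

-- key lemma: if the endpoint is 0, then α‖z0‖ ≤ t
lemma key (n : ℕ) (α : ℝ) (hα0 : 0 < α) (hα1 : α < 1)
    (z0 : EuclideanSpace ℝ (Fin n)) (t : ℝ) (ht : 0 < t)
    (u : ℝ → EuclideanSpace ℝ (Fin n)) (hu : Measurable u)
    (hub : ∀ᵐ τ ∂(volume.restrict (Set.Icc (0 : ℝ) t)), ‖u τ‖ ≤ 1)
    (hz : (t ^ (α - 1) / Real.Gamma α) • z0
          + ∫ τ in (0 : ℝ)..t, ((t - τ) ^ (α - 1) / Real.Gamma α) • u τ = 0) :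
    α * ‖z0‖ ≤ t := by
  set c := Real.Gamma α with hc
  have hcpos : 0 < c := Real.Gamma_pos_of_pos hα0
  -- a.e. bound on Ioc
  have hub' : ∀ᵐ τ ∂(volume.restrict (Set.Ioc (0 : ℝ) t)), ‖u τ‖ ≤ 1 :=
    ae_restrict_of_ae_restrict_of_subset Set.Ioc_subset_Icc_self hub
  have hgii : IntervalIntegrable (fun τ => (t - τ) ^ (α - 1) / c) volume 0 t :=
    (rpow_ii α t hα0).div_const c
  have hgint : IntegrableOn (fun τ => (t - τ) ^ (α - 1) / c) (Set.Ioc 0 t) :=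
    (intervalIntegrable_iff_integrableOn_Ioc_of_le ht.le).mp hgii
  have hmeas : AEStronglyMeasurable (fun τ => ((t - τ) ^ (α - 1) / c) • u τ)
      (volume.restrict (Set.Ioc 0 t)) :=
    hgint.aestronglyMeasurable.smul hu.aestronglyMeasurable
  have hbound : ∀ᵐ τ ∂(volume.restrict (Set.Ioc (0 : ℝ) t)),
      ‖((t - τ) ^ (α - 1) / c) • u τ‖ ≤ (t - τ) ^ (α - 1) / c := by
    filter_upwards [hub', ae_restrict_mem measurableSet_Ioc] with τ h1 h2
    have hpos : (0:ℝ) ≤ (t - τ) ^ (α - 1) / c :=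
      div_nonneg (Real.rpow_nonneg (by linarith [h2.2]) _) hcpos.le
    rw [norm_smul, Real.norm_eq_abs, abs_of_nonneg hpos]
    calc ((t - τ) ^ (α - 1) / c) * ‖u τ‖ ≤ ((t - τ) ^ (α - 1) / c) * 1 :=
          mul_le_mul_of_nonneg_left h1 hpos
      _ = _ := mul_one _
  have hfint : IntegrableOn (fun τ => ((t - τ) ^ (α - 1) / c) • u τ) (Set.Ioc 0 t) :=
    hgint.mono' hmeas hbound
  -- norm estimate
  have hnorm : ‖∫ τ in (0:ℝ)..t, ((t - τ) ^ (α - 1) / c) • u τ‖ ≤ t ^ α / (α * c) := by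
    rw [integral_of_le ht.le]
    calc ‖∫ τ in Set.Ioc (0:ℝ) t, ((t - τ) ^ (α - 1) / c) • u τ‖
        ≤ ∫ τ in Set.Ioc (0:ℝ) t, ‖((t - τ) ^ (α - 1) / c) • u τ‖ :=
          norm_integral_le_integral_norm _
      _ ≤ ∫ τ in Set.Ioc (0:ℝ) t, (t - τ) ^ (α - 1) / c :=
          integral_mono_ae hfint.norm hgint hbound
      _ = ∫ τ in (0:ℝ)..t, (t - τ) ^ (α - 1) / c := (integral_of_le ht.le).symm
      _ = (∫ τ in (0:ℝ)..t, (t - τ) ^ (α - 1)) / c := by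
          rw [intervalIntegral.integral_div]
      _ = (t ^ α / α) / c := by rw [rpow_int α t hα0 ht]
      _ = t ^ α / (α * c) := by rw [div_div]
  -- from hz
  have heq : ‖(t ^ (α - 1) / c) • z0‖ = ‖∫ τ in (0:ℝ)..t, ((t - τ) ^ (α - 1) / c) • u τ‖ := by
    rw [eq_neg_of_add_eq_zero_left hz, norm_neg]
  rw [norm_smul, Real.norm_eq_abs,
    abs_of_nonneg (div_nonneg (Real.rpow_nonneg ht.le _) hcpos.le)] at heq
  have h1 : t ^ (α - 1) / c * ‖z0‖ ≤ t ^ α / (α * c) := heq ▸ hnorm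
  have htpow : 0 < t ^ (α - 1) := Real.rpow_pos_of_pos ht _
  have hta : t ^ α = t ^ (α - 1) * t := by
    rw [← Real.rpow_add_one ht.ne' (α - 1), sub_add_cancel]
  rw [hta] at h1
  have h2 : t ^ (α - 1) * ‖z0‖ / c ≤ t ^ (α - 1) * t / (α * c) := by
    calc t ^ (α - 1) * ‖z0‖ / c = t ^ (α - 1) / c * ‖z0‖ := by ring
      _ ≤ _ := h1
  have h3 : t ^ (α - 1) * ‖z0‖ * (α * c) ≤ t ^ (α - 1) * t * c := by
    rw [div_le_div_iff₀ hcpos (by positivity)] at h2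
    linarith [h2]
  have h3' : (α * ‖z0‖) * (t ^ (α - 1) * c) ≤ t * (t ^ (α - 1) * c) := by
    nlinarith [h3]
  exact le_of_mul_le_mul_right h3' (mul_pos htpow hcpos)


/-- For `0 < α < 1` and `z⁰ ≠ 0`: for every `0 < t < α‖z⁰‖` and every measurable control
`u` with `‖u(τ)‖ ≤ 1` a.e. on `[0,t]`, the trajectory endpoint
`(t^{α−1}/Γ(α)) z⁰ + ∫_0^t ((t−τ)^{α−1}/Γ(α)) u(τ) dτ` is nonzero.  Hence `T = α‖z⁰‖` is
the minimal time at which the system `D^α z = u`, `‖u‖ ≤ 1`, `J^{1−α}z|_{t=0} = z⁰`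
can reach the origin. -/
theorem stmt19 (n : ℕ) (α : ℝ) (hα0 : 0 < α) (hα1 : α < 1)
    (z0 : EuclideanSpace ℝ (Fin n)) (hz0 : z0 ≠ 0) :
    (∀ t : ℝ, 0 < t → t < α * ‖z0‖ →
      ∀ u : ℝ → EuclideanSpace ℝ (Fin n), Measurable u →
        (∀ᵐ τ ∂(volume.restrict (Set.Icc (0 : ℝ) t)), ‖u τ‖ ≤ 1) →
        (t ^ (α - 1) / Real.Gamma α) • z0
          + ∫ τ in (0 : ℝ)..t, ((t - τ) ^ (α - 1) / Real.Gamma α) • u τ ≠ 0) ∧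
    IsLeast
      {t : ℝ | 0 < t ∧ ∃ u : ℝ → EuclideanSpace ℝ (Fin n), Measurable u ∧
        (∀ᵐ τ ∂(volume.restrict (Set.Icc (0 : ℝ) t)), ‖u τ‖ ≤ 1) ∧
        (t ^ (α - 1) / Real.Gamma α) • z0
          + ∫ τ in (0 : ℝ)..t, ((t - τ) ^ (α - 1) / Real.Gamma α) • u τ = 0}
      (α * ‖z0‖) := by
  have hz0' : (0:ℝ) < ‖z0‖ := norm_pos_iff.mpr hz0
  have hT : 0 < α * ‖z0‖ := mul_pos hα0 hz0'
  have hcpos : 0 < Real.Gamma α := Real.Gamma_pos_of_pos hα0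
  constructor
  · intro t ht htlt u hu hub hz
    exact absurd (key n α hα0 hα1 z0 t ht u hu hub hz) (not_le.mpr htlt)
  · constructor
    · -- membership
      refine ⟨hT, fun _ => -(‖z0‖⁻¹ • z0), measurable_const, ?_, ?_⟩
      · refine Filter.Eventually.of_forall fun τ => ?_
        rw [norm_neg, norm_smul, norm_inv, norm_norm, inv_mul_cancel₀ hz0'.ne']
      · set t := α * ‖z0‖
        have hint : ∫ τ in (0:ℝ)..t, ((t - τ) ^ (α - 1) / Real.Gamma α) •
            (-(‖z0‖⁻¹ • z0)) = ((t ^ α / α) / Real.Gamma α) • (-(‖z0‖⁻¹ • z0)) := by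
          rw [intervalIntegral.integral_smul_const, intervalIntegral.integral_div,
            rpow_int α t hα0 hT]
        rw [hint, smul_neg, smul_smul, ← sub_eq_add_neg, ← sub_smul]
        convert zero_smul ℝ z0 using 2
        have hta : t ^ α = t ^ (α - 1) * t := by
          rw [← Real.rpow_add_one hT.ne' (α - 1), sub_add_cancel]
        rw [hta]
        field_simp
        ring
    · rintro t ⟨ht, u, hu, hub, hz⟩
      exact key n α hα0 hα1 z0 t ht u hu hub hz
end
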